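/- arXiv:2307.00785 — 9 statements merged into one kernel-verified Lean document; each statement's English description precedes it below -/
import Mathlib

section
/- For every natural number n ≥ 2 and every nonzero complex number q, there exists an invertible n×n complex matrix M such that tr(Mᵀ · M⁻¹) = -(q + q⁻¹). -/
/-!
For a transvection `M = 1 + a Eᵢⱼ` (`i ≠ j`) one has `M⁻¹ = 1 - a Eᵢⱼ` and `Mᵀ = 1 + a Eⱼᵢ`,
so `tr (Mᵀ M⁻¹) = n - a²`. Over `ℂ` we may pick `a` with `a² = n + q + q⁻¹`.
-/

open Matrix

namespace Matrix

variable {n R : Type*} [DecidableEq n] [CommRing R]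

theorem transpose_transvection (i j : n) (c : R) :
    (transvection i j c)ᵀ = transvection j i c := by
  rw [transvection, transvection, transpose_add, transpose_one, transpose_single]

variable [Fintype n] {i j : n}

theorem inv_transvection (h : i ≠ j) (c : R) :
    (transvection i j c)⁻¹ = transvection i j (-c) :=
  inv_eq_right_inv <| by rw [transvection_mul_transvection_same _ _ h, add_neg_cancel,
    transvection_zero]

theorem trace_transvection_mul_transvection (h : i ≠ j) (c d : R) :
    (transvection j i c * transvection i j d).trace = Fintype.card n + c * d := by
  simp only [transvection, add_mul, mul_add, mul_one, one_mul, single_mul_single_same,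
    trace_add, trace_one, trace_single_eq_of_ne _ _ _ h, trace_single_eq_of_ne _ _ _ h.symm,
    trace_single_eq_same]
  ring

theorem trace_transpose_transvection_mul_inv (h : i ≠ j) (c : R) :
    ((transvection i j c)ᵀ * (transvection i j c)⁻¹).trace = Fintype.card n - c ^ 2 := by
  rw [transpose_transvection, inv_transvection h, trace_transvection_mul_transvection h]
  ring

end Matrix

theorem exists_invertible_matrix_trace_eq_neg_quantum_two_general
    (n : ℕ) (hn : 2 ≤ n) (q : ℂ) :
    ∃ M : Matrix (Fin n) (Fin n) ℂ, IsUnit M ∧ (Mᵀ * M⁻¹).trace = -(q + q⁻¹) := by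
  obtain ⟨a, ha⟩ : ∃ a : ℂ, a ^ 2 = n + q + q⁻¹ := IsAlgClosed.exists_pow_nat_eq _ two_pos
  have : Nontrivial (Fin n) := Fin.nontrivial_iff_two_le.mpr hn
  obtain ⟨i, j, hij⟩ := exists_pair_ne (Fin n)
  refine ⟨transvection i j a, ?_, ?_⟩
  · rw [isUnit_iff_isUnit_det, det_transvection_of_ne _ _ hij]
    exact isUnit_one
  · rw [trace_transpose_transvection_mul_inv hij, ha, Fintype.card_fin]
    ring

/-- For every `n ≥ 2` and every nonzero `q : ℂ`, there is an invertible `n×n` complex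
matrix `M` with `tr(Mᵀ * M⁻¹) = -(q + q⁻¹)`. -/
theorem exists_invertible_matrix_trace_eq_neg_quantum_two
    (n : ℕ) (hn : 2 ≤ n) (q : ℂ) (hq : q ≠ 0) :
    ∃ M : Matrix (Fin n) (Fin n) ℂ, IsUnit M ∧ (Mᵀ * M⁻¹).trace = -(q + q⁻¹) :=
  exists_invertible_matrix_trace_eq_neg_quantum_two_general n hn q
end

section
/- Let n ≥ 2 be a natural number and x a nonzero complex number. The n×n block-diagonal matrix M consisting of the (n-2)×(n-2) identity matrix in the upper-left block and the 2×2 matrix [[0,1],[x,0]] in the lower-right block (all other entries 0) is invertible and satisfies tr(Mᵀ · M⁻¹) = (n-2) + x + x⁻¹. -/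
/-!
Splitting `Fin n = Fin (n - 2) ⊕ Fin 2` turns `M` into `fromBlocks 1 0 0 A` with
`A = !![0, 1; x, 0]`. Both the transpose and the inverse of a block-diagonal matrix are computed
blockwise, and `Aᵀ * A⁻¹ = !![x, 0; 0, x⁻¹]`, so the trace is `(n - 2) + x + x⁻¹`.
-/

open Matrix

namespace Matrix

variable {m n R : Type*} [Fintype m] [Fintype n]

theorem trace_reindex_self [AddCommMonoid R] (e : m ≃ n) (A : Matrix m m R) :
    (reindex e e A).trace = A.trace :=
  Fintype.sum_equiv e.symm _ _ fun _ => rfl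

theorem trace_fromBlocks [AddCommMonoid R] (A : Matrix m m R) (B : Matrix m n R)
    (C : Matrix n m R) (D : Matrix n n R) :
    (fromBlocks A B C D).trace = A.trace + D.trace :=
  Fintype.sum_sum_type _

variable [DecidableEq m] [DecidableEq n] [CommRing R]

theorem trace_transpose_mul_inv_reindex (e : m ≃ n) (A : Matrix m m R) :
    ((reindex e e A)ᵀ * (reindex e e A)⁻¹).trace = (Aᵀ * A⁻¹).trace := by
  rw [transpose_reindex, inv_reindex, reindex_apply, reindex_apply, submatrix_mul_equiv,
    ← reindex_apply, trace_reindex_self]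

theorem trace_transpose_mul_inv_fromBlocks_zero (A : Matrix m m R) (D : Matrix n n R)
    (hAD : IsUnit A ↔ IsUnit D) :
    ((fromBlocks A 0 0 D)ᵀ * (fromBlocks A 0 0 D)⁻¹).trace =
      (Aᵀ * A⁻¹).trace + (Dᵀ * D⁻¹).trace := by
  rw [inv_fromBlocks_zero₂₁_of_isUnit_iff A 0 D hAD, fromBlocks_transpose, fromBlocks_multiply,
    trace_fromBlocks]
  simp

section Antidiag

variable {K : Type*} [Field K] {x : K}

theorem isUnit_antidiag (hx : x ≠ 0) : IsUnit !![0, 1; x, 0] := by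
  simp [isUnit_iff_isUnit_det, det_fin_two_of, hx]

theorem inv_antidiag (hx : x ≠ 0) : !![0, 1; x, 0]⁻¹ = !![0, x⁻¹; 1, 0] :=
  inv_eq_right_inv (by simp [one_fin_two, hx])

theorem trace_transpose_mul_inv_antidiag (hx : x ≠ 0) :
    (!![0, 1; x, 0]ᵀ * !![0, 1; x, 0]⁻¹).trace = x + x⁻¹ := by
  simp [inv_antidiag hx, trace_fin_two, mul_apply, Fin.sum_univ_two]

end Antidiag

end Matrix

theorem ite_blockMatrix_eq_reindex_fromBlocks {R : Type*} [Semiring R] (m : ℕ) (x : R) :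
    (fun i j : Fin (m + 2) =>
      if i.val < m then (if i = j then 1 else 0)
      else if i.val = m ∧ j.val = m + 1 then 1
      else if i.val = m + 1 ∧ j.val = m then x
      else 0) = reindex finSumFinEquiv finSumFinEquiv (fromBlocks 1 0 0 !![0, 1; x, 0]) := by
  ext i j
  induction i using Fin.addCases with
  | left a =>
    induction j using Fin.addCases with
    | left b => simp [one_apply, Fin.ext_iff]
    | right b => simp [Fin.ext_iff, (Nat.lt_add_right _ a.isLt).ne]
  | right a =>
    induction j using Fin.addCases with
    | left b => fin_cases a <;> simp [(Nat.lt_add_right _ b.isLt).ne, b.isLt.ne]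
    | right b => fin_cases a <;> fin_cases b <;> simp

/-- For `n ≥ 2` and nonzero `x : ℂ`, the block-diagonal matrix with the `(n-2)×(n-2)`
identity in the upper-left block and `[[0,1],[x,0]]` in the lower-right block is invertible
and satisfies `tr(Mᵀ * M⁻¹) = (n-2) + x + x⁻¹`. -/
theorem blockMatrix_trace_transpose_mul_inv
    (n : ℕ) (hn : 2 ≤ n) (x : ℂ) (hx : x ≠ 0)
    (M : Matrix (Fin n) (Fin n) ℂ)
    (hM : M = fun i j =>
      if i.val < n - 2 then (if i = j then 1 else 0)
      else if i.val = n - 2 ∧ j.val = n - 1 then 1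
      else if i.val = n - 1 ∧ j.val = n - 2 then x
      else 0) :
    IsUnit M ∧ (Mᵀ * M⁻¹).trace = ((n : ℂ) - 2) + x + x⁻¹ := by
  obtain ⟨m, rfl⟩ : ∃ m, n = m + 2 := ⟨n - 2, by omega⟩
  rw [show m + 2 - 2 = m by omega, show m + 2 - 1 = m + 1 by omega,
    ite_blockMatrix_eq_reindex_fromBlocks] at hM
  subst hM
  have hA := isUnit_antidiag hx
  refine ⟨?_, ?_⟩
  · exact (isUnit_fromBlocks_zero₂₁.mpr ⟨isUnit_one, hA⟩).map
      (reindexAlgEquiv ℂ ℂ finSumFinEquiv)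
  · rw [trace_transpose_mul_inv_reindex, trace_transpose_mul_inv_fromBlocks_zero _ _
      (iff_of_true isUnit_one hA), trace_transpose_mul_inv_antidiag hx]
    simp only [transpose_one, inv_one, mul_one, trace_one, Fintype.card_fin]
    push_cast
    ring
end

section
/- Let n ≥ 1 be a natural number and let G_n be the n×n complex matrix with entries (G_n)_{ij} = (-1)^{n-i} if j = n+1-i or j = n+2-i, and 0 otherwise (indices ranging from 1 to n). Then G_n is invertible and tr(G_nᵀ · G_n⁻¹) = (-1)^{n+1} · n. -/
open Matrix

/-- The matrix `G_n`, with 1-based entries `(G_n)_{ij} = (-1)^{n-i}` if `j = n+1-i` or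
`j = n+2-i`, and `0` otherwise. In 0-based indexing: entry `(i,j)` equals
`(-1)^(n-1-i)` if `j = n-1-i` or `j = n-i`, and `0` otherwise. -/
def Gmat (n : ℕ) : Matrix (Fin n) (Fin n) ℂ :=
  Matrix.of fun i j =>
    if (j : ℕ) = n - 1 - (i : ℕ) ∨ (j : ℕ) = n - (i : ℕ) then (-1 : ℂ) ^ (n - 1 - (i : ℕ))
    else 0

/-- Candidate inverse of `Gmat n`. -/
def Bmat (n : ℕ) : Matrix (Fin n) (Fin n) ℂ :=
  Matrix.of fun i j => if (i : ℕ) + (j : ℕ) < n then (-1 : ℂ) ^ (i : ℕ) else 0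

lemma sum_pair_eq {n : ℕ} (f : Fin n → ℂ) (a b : Fin n) (hab : a ≠ b)
    (h : ∀ k, k ≠ a → k ≠ b → f k = 0) : ∑ k, f k = f a + f b := by
  rw [← Finset.sum_subset (Finset.subset_univ {a, b})
    (fun x _ hx => by
      simp only [Finset.mem_insert, Finset.mem_singleton, not_or] at hx
      exact h x hx.1 hx.2)]
  exact Finset.sum_pair hab

lemma neg_one_sq_pow (a : ℕ) : (-1 : ℂ) ^ a * (-1 : ℂ) ^ a = 1 := by
  rw [← pow_add]
  have : a + a = 2 * a := by ring
  rw [this, pow_mul]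
  norm_num

lemma Gmat_mul_Bmat (n : ℕ) (hn : 1 ≤ n) : Gmat n * Bmat n = 1 := by
  ext i j
  rw [Matrix.mul_apply]
  simp only [Gmat, Bmat, Matrix.of_apply]
  have hi : (i : ℕ) < n := i.isLt
  have hj : (j : ℕ) < n := j.isLt
  have ha : n - 1 - (i : ℕ) < n := by omega
  by_cases hi0 : (i : ℕ) = 0
  · -- only one nonzero term, at k = n-1
    rw [Fintype.sum_eq_single (⟨n - 1 - (i : ℕ), ha⟩ : Fin n)
      (fun k hk => by
        have hk' : (k : ℕ) ≠ n - 1 - (i : ℕ) := by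
          intro h; exact hk (Fin.ext h)
        have hk'' : (k : ℕ) ≠ n - (i : ℕ) := by
          have := k.isLt; omega
        simp [hk', hk''])]
    have hcond : (n - 1 - (i : ℕ)) + (j : ℕ) < n ↔ (j : ℕ) ≤ (i : ℕ) := by omega
    by_cases hji : (j : ℕ) ≤ (i : ℕ)
    · have hij : i = j := Fin.ext (by omega)
      simp only [hcond.mpr hji, if_true, true_or, if_pos, neg_one_sq_pow]
      rw [hij, Matrix.one_apply_eq]
    · have h1 : ¬ ((n - 1 - (i : ℕ)) + (j : ℕ) < n) := fun h => hji (hcond.mp h)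
      have h2 : i ≠ j := fun h => hji (by rw [h])
      simp [h1, Matrix.one_apply_ne h2]
  · -- two nonzero terms, at k = n-1-i and k = n-i
    have hb : n - (i : ℕ) < n := by omega
    have hne : (⟨n - 1 - (i : ℕ), ha⟩ : Fin n) ≠ ⟨n - (i : ℕ), hb⟩ := by
      simp only [ne_eq, Fin.mk.injEq]
      omega
    rw [sum_pair_eq _ _ _ hne
      (fun k hk1 hk2 => by
        have h1 : (k : ℕ) ≠ n - 1 - (i : ℕ) := fun h => hk1 (Fin.ext h)
        have h2 : (k : ℕ) ≠ n - (i : ℕ) := fun h => hk2 (Fin.ext h)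
        simp [h1, h2])]
    have hcond1 : (n - 1 - (i : ℕ)) + (j : ℕ) < n ↔ (j : ℕ) ≤ (i : ℕ) := by omega
    have hcond2 : (n - (i : ℕ)) + (j : ℕ) < n ↔ (j : ℕ) < (i : ℕ) := by omega
    have hpow : (-1 : ℂ) ^ (n - (i : ℕ)) = -(-1 : ℂ) ^ (n - 1 - (i : ℕ)) := by
      have h : n - (i : ℕ) = (n - 1 - (i : ℕ)) + 1 := by omega
      rw [h, pow_succ]
      ring
    have hab : n - 1 - (i : ℕ) ≠ n - (i : ℕ) := by omega
    by_cases hji : (j : ℕ) < (i : ℕ)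
    · have h2 : i ≠ j := fun h => (lt_irrefl (i : ℕ)) (h ▸ hji)
      simp only [hcond1.mpr (le_of_lt hji), hcond2.mpr hji, if_true, hpow, true_or, or_true,
        Matrix.one_apply_ne h2, if_pos]
      rw [mul_neg, neg_one_sq_pow]
      norm_num
    · by_cases hji' : (j : ℕ) ≤ (i : ℕ)
      · have hij : i = j := Fin.ext (by omega)
        have h1 : ¬ ((n - (i : ℕ)) + (j : ℕ) < n) := fun h => hji (hcond2.mp h)
        simp only [hcond1.mpr hji', h1, if_true, if_false, true_or, or_true, if_pos, if_neg,
          not_false_iff, mul_zero, add_zero, neg_one_sq_pow]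
        rw [hij, Matrix.one_apply_eq]
      · have h1 : ¬ ((n - 1 - (i : ℕ)) + (j : ℕ) < n) := fun h => hji' (hcond1.mp h)
        have h2 : ¬ ((n - (i : ℕ)) + (j : ℕ) < n) := fun h => hji (hcond2.mp h)
        have h3 : i ≠ j := fun h => hji' (by rw [h])
        simp [h1, h2, Matrix.one_apply_ne h3]

/-- For `n ≥ 1`, the matrix `G_n` is invertible and
`tr(G_nᵀ * G_n⁻¹) = (-1)^(n+1) * n`. -/
theorem Gmat_isUnit_and_trace (n : ℕ) (hn : 1 ≤ n) :
    IsUnit (Gmat n) ∧ ((Gmat n)ᵀ * (Gmat n)⁻¹).trace = (-1 : ℂ) ^ (n + 1) * n := by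
  have hGB := Gmat_mul_Bmat n hn
  have hBG : Bmat n * Gmat n = 1 := mul_eq_one_comm.mp hGB
  have hInv : Invertible (Gmat n) := ⟨Bmat n, hBG, hGB⟩
  have hUnit : IsUnit (Gmat n) := isUnit_of_invertible _
  refine ⟨hUnit, ?_⟩
  rw [Matrix.inv_eq_right_inv hGB]
  rw [Matrix.trace]
  simp only [Matrix.diag_apply, Matrix.mul_apply, Matrix.transpose_apply]
  rw [Finset.sum_comm]
  have hinner : ∀ k : Fin n,
      (∑ i : Fin n, Gmat n k i * Bmat n k i) = (-1 : ℂ) ^ (n - 1) := by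
    intro k
    have hk : (k : ℕ) < n := k.isLt
    have ha : n - 1 - (k : ℕ) < n := by omega
    rw [Fintype.sum_eq_single (⟨n - 1 - (k : ℕ), ha⟩ : Fin n)
      (fun i hi => by
        have h1 : (i : ℕ) ≠ n - 1 - (k : ℕ) := fun h => hi (Fin.ext h)
        by_cases h2 : (i : ℕ) = n - (k : ℕ)
        · have hB : ¬ ((k : ℕ) + (i : ℕ) < n) := by omega
          simp [Gmat, Bmat, hB]
        · simp [Gmat, Bmat, h1, h2])]
    simp only [Gmat, Bmat, Matrix.of_apply]
    have hB : (k : ℕ) + (n - 1 - (k : ℕ)) < n := by omega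
    simp only [hB, if_true, true_or, if_pos]
    rw [← pow_add]
    congr 1
    omega
  rw [Finset.sum_congr rfl (fun k _ => hinner k), Finset.sum_const, Finset.card_univ,
    Fintype.card_fin, nsmul_eq_mul]
  have : (-1 : ℂ) ^ (n + 1) = (-1 : ℂ) ^ (n - 1) := by
    have h : n + 1 = (n - 1) + 2 := by omega
    rw [h, pow_add]
    norm_num
  rw [this]
  ring
end

section
/- For every complex number c there exists an infinite set S of invertible 4×4 complex matrices such that every M ∈ S satisfies tr(Mᵀ · M⁻¹) = c, and no two distinct elements of S are congruent to each other. -/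
open Matrix

/-- Matrix congruence: `A ≡_c B` iff `A = Pᵀ * B * P` for some invertible `P`. -/
def MatrixCongruent {n : ℕ} (A B : Matrix (Fin n) (Fin n) ℂ) : Prop :=
  ∃ P : Matrix (Fin n) (Fin n) ℂ, IsUnit P ∧ A = Pᵀ * B * P

/-!
Congruence `A = Pᵀ B P` turns the cosquare `Aᵀ A⁻¹` into the similar matrix
`Pᵀ (Bᵀ B⁻¹) (Pᵀ)⁻¹`, so the traces of all powers of the cosquare are congruence invariants.
The block-diagonal matrices `diag([[1, b], [1, 1]], [[1, d], [1, 1]])` have cosquare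
`diag([[0, 1], [-1, 1 + b]], [[0, 1], [-1, 1 + d]])`, of trace `(1 + b) + (1 + d)` and with
square of trace `(1 + b)² + (1 + d)² - 4`. Taking `b = c/2 + n`, `d = c/2 - 2 - n` fixes the
first trace at `c`, while the second one, `c²/2 + 2(n + 1)² - 4`, separates the `n : ℕ`;
only the (at most two) `n` with `b = 1` or `d = 1` give singular matrices.
-/

section Cosquare

variable {ι R : Type*} [Fintype ι] [DecidableEq ι] [CommRing R]

noncomputable def cosquare (A : Matrix ι ι R) : Matrix ι ι R := Aᵀ * A⁻¹

lemma cosquare_eq_of_transpose_eq_mul {A C : Matrix ι ι R} (hA : IsUnit A.det)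
    (h : Aᵀ = C * A) : cosquare A = C := by
  rw [cosquare, h, mul_nonsing_inv_cancel_right _ _ hA]

lemma cosquare_transpose_mul_mul {P : Matrix ι ι R} (hP : IsUnit P) (B : Matrix ι ι R) :
    cosquare (Pᵀ * B * P) = Pᵀ * cosquare B * (Pᵀ)⁻¹ := by
  have hPdet : IsUnit P.det := (isUnit_iff_isUnit_det P).mp hP
  rw [cosquare, cosquare, transpose_mul, transpose_mul, transpose_transpose, Matrix.mul_inv_rev,
    Matrix.mul_inv_rev]
  simp only [Matrix.mul_assoc, mul_nonsing_inv_cancel_left _ _ hPdet]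

lemma trace_cosquare_transpose_mul_mul_pow {P : Matrix ι ι R} (hP : IsUnit P)
    (B : Matrix ι ι R) (k : ℕ) :
    (cosquare (Pᵀ * B * P) ^ k).trace = (cosquare B ^ k).trace := by
  have hPt : IsUnit Pᵀ := (isUnit_transpose P).mpr hP
  rw [cosquare_transpose_mul_mul hP, ← hPt.unit_spec, ← coe_units_inv, Units.conj_pow,
    trace_units_conj]

end Cosquare

lemma MatrixCongruent.refl {n : ℕ} (A : Matrix (Fin n) (Fin n) ℂ) : MatrixCongruent A A :=
  ⟨1, isUnit_one, by simp⟩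

lemma MatrixCongruent.trace_cosquare_pow {n : ℕ} {A B : Matrix (Fin n) (Fin n) ℂ}
    (h : MatrixCongruent A B) (k : ℕ) : (cosquare A ^ k).trace = (cosquare B ^ k).trace := by
  obtain ⟨P, hP, rfl⟩ := h
  exact trace_cosquare_transpose_mul_mul_pow hP B k

def blockMatrix (b d : ℂ) : Matrix (Fin 4) (Fin 4) ℂ :=
  !![1, b, 0, 0; 1, 1, 0, 0; 0, 0, 1, d; 0, 0, 1, 1]

def blockCosquare (b d : ℂ) : Matrix (Fin 4) (Fin 4) ℂ :=
  !![0, 1, 0, 0; -1, 1 + b, 0, 0; 0, 0, 0, 1; 0, 0, -1, 1 + d]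

lemma det_blockMatrix (b d : ℂ) : (blockMatrix b d).det = (1 - b) * (1 - d) := by
  simp [blockMatrix, det_succ_row_zero, Fin.sum_univ_succ, Fin.succAbove]
  ring

lemma transpose_blockMatrix (b d : ℂ) :
    (blockMatrix b d)ᵀ = blockCosquare b d * blockMatrix b d := by
  ext i j
  fin_cases i <;> fin_cases j <;> simp [blockMatrix, blockCosquare, mul_apply, Fin.sum_univ_four]

lemma cosquare_blockMatrix {b d : ℂ} (h : (blockMatrix b d).det ≠ 0) :
    cosquare (blockMatrix b d) = blockCosquare b d :=
  cosquare_eq_of_transpose_eq_mul h.isUnit (transpose_blockMatrix b d)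

lemma trace_blockCosquare (b d : ℂ) : (blockCosquare b d).trace = (1 + b) + (1 + d) := by
  simp [blockCosquare, trace, Fin.sum_univ_four]

lemma trace_blockCosquare_sq (b d : ℂ) :
    (blockCosquare b d ^ 2).trace = (1 + b) ^ 2 + (1 + d) ^ 2 - 4 := by
  simp [blockCosquare, sq, trace, Fin.sum_univ_four]
  ring

section SolutionFamily

variable (c : ℂ)

noncomputable def solutionFamily (n : ℕ) : Matrix (Fin 4) (Fin 4) ℂ :=
  blockMatrix (c / 2 + n) (c / 2 - 2 - n)

lemma finite_setOf_det_solutionFamily_eq_zero : {n | (solutionFamily c n).det = 0}.Finite := by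
  have hfiber (z : ℂ) : {n : ℕ | (n : ℂ) = z}.Finite :=
    (Set.finite_singleton z).preimage Nat.cast_injective.injOn
  refine ((hfiber (1 - c / 2)).union (hfiber (c / 2 - 3))).subset fun n hn => ?_
  simp only [Set.mem_ofPred_eq, solutionFamily, det_blockMatrix, mul_eq_zero, sub_eq_zero] at hn
  rcases hn with hn | hn
  · exact Or.inl (show (n : ℂ) = 1 - c / 2 by linear_combination -hn)
  · exact Or.inr (show (n : ℂ) = c / 2 - 3 by linear_combination hn)

variable {c}

lemma trace_cosquare_solutionFamily {n : ℕ} (hn : (solutionFamily c n).det ≠ 0) :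
    (cosquare (solutionFamily c n)).trace = c := by
  rw [solutionFamily, cosquare_blockMatrix hn, trace_blockCosquare]
  ring

lemma trace_cosquare_solutionFamily_sq {n : ℕ} (hn : (solutionFamily c n).det ≠ 0) :
    (cosquare (solutionFamily c n) ^ 2).trace = c ^ 2 / 2 + 2 * ((n : ℂ) + 1) ^ 2 - 4 := by
  rw [solutionFamily, cosquare_blockMatrix hn, trace_blockCosquare_sq]
  ring

lemma eq_of_matrixCongruent_solutionFamily {m n : ℕ} (hm : (solutionFamily c m).det ≠ 0)
    (hn : (solutionFamily c n).det ≠ 0)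
    (h : MatrixCongruent (solutionFamily c m) (solutionFamily c n)) : m = n := by
  have htr := h.trace_cosquare_pow 2
  rw [trace_cosquare_solutionFamily_sq hm, trace_cosquare_solutionFamily_sq hn] at htr
  have hsq : ((m + 1) ^ 2 : ℕ) = (n + 1) ^ 2 := by
    exact_mod_cast (by linear_combination htr / 2 : ((m : ℂ) + 1) ^ 2 = ((n : ℂ) + 1) ^ 2)
  simpa using Nat.pow_left_injective two_ne_zero hsq

end SolutionFamily

/-- For every `c : ℂ` there are infinitely many pairwise non-congruent invertible `4×4`
complex matrices `M` with `tr(Mᵀ * M⁻¹) = c`. -/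
theorem exists_infinite_noncongruent_solutions (c : ℂ) :
    ∃ S : Set (Matrix (Fin 4) (Fin 4) ℂ), S.Infinite ∧
      (∀ M ∈ S, IsUnit M ∧ (Mᵀ * M⁻¹).trace = c) ∧
      (∀ M ∈ S, ∀ N ∈ S, M ≠ N → ¬ MatrixCongruent M N) := by
  refine ⟨solutionFamily c '' {n | (solutionFamily c n).det ≠ 0}, ?_, ?_, ?_⟩
  · refine (finite_setOf_det_solutionFamily_eq_zero c).infinite_compl.image fun m hm n hn h => ?_
    exact eq_of_matrixCongruent_solutionFamily hm hn (h ▸ MatrixCongruent.refl _)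
  · rintro _ ⟨n, hn, rfl⟩
    exact ⟨(isUnit_iff_isUnit_det _).mpr hn.isUnit, trace_cosquare_solutionFamily hn⟩
  · rintro _ ⟨m, hm, rfl⟩ _ ⟨n, hn, rfl⟩ hne hcongr
    exact hne (congrArg _ (eq_of_matrixCongruent_solutionFamily hm hn hcongr))
end

section
/- Let q be a complex number with q ∉ {0, 1, -1}. Then every invertible 2×2 complex matrix M with tr(Mᵀ · M⁻¹) = -(q + q⁻¹) is congruent to the standard solution S = [[0, 1], [-q, 0]]. -/
open Matrix

/-- Matrix congruence: `A ≡_c B` iff `A = Pᵀ * B * P` for some invertible `P`. -/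
def MatCongruent {n : ℕ} (A B : Matrix (Fin n) (Fin n) ℂ) : Prop :=
  ∃ P : Matrix (Fin n) (Fin n) ℂ, IsUnit P ∧ A = Pᵀ * B * P

/-!
Write `S = !![0, 1; -q, 0]` and `M = !![a, b; c, d]`. For `P = !![p, r; s, t]` the matrix
`Pᵀ S P` has diagonal `(1 - q) ps, (1 - q) rt` and off-diagonal entries `pt - q rs, rs - q pt`,
so `M ≡_c S` as soon as the four products `ps, pt, rs, rt` can be prescribed as
`a / (1 - q), x, y, d / (1 - q)`, where `x - q y = b` and `y - q x = c`. Four such products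
exist iff the prescribed values satisfy `ps · rt = pt · rs`, which after clearing denominators is
`(b + q c)(c + q b) = a d (1 + q)²`; this is exactly the trace condition
`(2ad - b² - c²) / (ad - bc) = -(q + q⁻¹)`. Finally `det P = x - y = (b - c) / (1 + q)`, and
`b ≠ c` because for symmetric `M` the trace condition forces `(1 + q)² det M = 0`.
-/

/-- Also for singular `M`, where `M⁻¹ = 0` and `x / 0 = 0` make both sides `0`. -/
theorem Matrix.trace_transpose_mul_inv_fin_two {K : Type*} [Field K]
    (M : Matrix (Fin 2) (Fin 2) K) :
    (Mᵀ * M⁻¹).trace = (2 * M 0 0 * M 1 1 - M 0 1 ^ 2 - M 1 0 ^ 2) / M.det := by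
  rw [inv_def, adjugate_fin_two, Ring.inverse_eq_inv', det_fin_two]
  simp only [Fin.isValue, smul_of, smul_cons, smul_eq_mul, mul_neg, smul_empty, trace_fin_two,
    mul_apply, transpose_apply, of_apply, cons_val', cons_val_zero, cons_val_fin_one,
    Fin.sum_univ_two, cons_val_one]
  ring

theorem Matrix.transpose_mul_mul_fin_two {R : Type*} [CommRing R] (q p r s t : R) :
    !![p, r; s, t]ᵀ * !![0, 1; -q, 0] * !![p, r; s, t] =
      !![(1 - q) * (p * s), p * t - q * (r * s); r * s - q * (p * t), (1 - q) * (r * t)] := by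
  ext i j
  fin_cases i <;> fin_cases j <;> simp [mul_apply, Fin.sum_univ_two] <;> ring

theorem exists_mul_eq_of_mul_eq_mul {K : Type*} [Field K] {α x y δ : K} (h : α * δ = x * y) :
    ∃ p r s t : K, p * s = α ∧ p * t = x ∧ r * s = y ∧ r * t = δ := by
  by_cases hα : α = 0
  · by_cases hx : x = 0
    · exact ⟨0, 1, y, δ, by simp [hα], by simp [hx], one_mul y, one_mul δ⟩
    · have hy : y = 0 := by simpa [hα, hx] using h.symm
      exact ⟨1, δ / x, 0, x, by simp [hα], one_mul x, by simp [hy], div_mul_cancel₀ δ hx⟩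
  · refine ⟨1, y / α, α, x, one_mul α, one_mul x, div_mul_cancel₀ y hα, ?_⟩
    rw [div_mul_eq_mul_div, mul_comm y, ← h, mul_div_cancel_left₀ δ hα]

theorem matCongruent_standard_of_mul_eq {q : ℂ} (hq1 : q ≠ 1) (hqm1 : q ≠ -1)
    {M : Matrix (Fin 2) (Fin 2) ℂ}
    (hprod : (M 0 1 + q * M 1 0) * (M 1 0 + q * M 0 1) = M 0 0 * M 1 1 * (1 + q) ^ 2)
    (hMsymm : M 0 1 ≠ M 1 0) : MatCongruent M !![0, 1; -q, 0] := by
  have h1pq : 1 + q ≠ 0 := fun h => hqm1 (by linear_combination h)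
  obtain ⟨p, r, s, t, hps, hpt, hrs, hrt⟩ := exists_mul_eq_of_mul_eq_mul
    (α := M 0 0 / (1 - q)) (x := (M 0 1 + q * M 1 0) / ((1 - q) * (1 + q)))
    (y := (M 1 0 + q * M 0 1) / ((1 - q) * (1 + q))) (δ := M 1 1 / (1 - q))
    (by field_simp; linear_combination (-1 : ℂ) * hprod)
  refine ⟨!![p, r; s, t], ?_, ?_⟩
  · have hdet : p * t - r * s = (M 0 1 - M 1 0) / (1 + q) := by
      rw [hpt, hrs]
      field_simp
      ring
    rw [isUnit_iff_isUnit_det, det_fin_two_of, isUnit_iff_ne_zero, hdet]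
    exact div_ne_zero (sub_ne_zero.mpr hMsymm) h1pq
  · rw [transpose_mul_mul_fin_two, hps, hpt, hrs, hrt]
    ext i j
    fin_cases i <;> fin_cases j <;> simp <;> field_simp <;> ring

/-- For `q ∉ {0, 1, -1}`, every invertible `2×2` complex matrix `M` with
`tr(Mᵀ * M⁻¹) = -(q + q⁻¹)` is congruent to the standard solution `[[0,1],[-q,0]]`. -/
theorem solution_congruent_standard (q : ℂ) (hq0 : q ≠ 0) (hq1 : q ≠ 1) (hqm1 : q ≠ -1)
    (M : Matrix (Fin 2) (Fin 2) ℂ) (hM : IsUnit M)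
    (htr : (Mᵀ * M⁻¹).trace = -(q + q⁻¹)) :
    MatCongruent M !![0, 1; -q, 0] := by
  have hdet : M 0 0 * M 1 1 - M 0 1 * M 1 0 ≠ 0 :=
    det_fin_two M ▸ ((isUnit_iff_isUnit_det M).mp hM).ne_zero
  rw [trace_transpose_mul_inv_fin_two, det_fin_two] at htr
  field_simp at htr
  have hMsymm : M 0 1 ≠ M 1 0 := by
    intro hsymm
    have h1pq : (1 + q) ^ 2 ≠ 0 := pow_ne_zero 2 fun h => hqm1 (by linear_combination h)
    refine hdet (mul_left_cancel₀ h1pq ?_)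
    rw [hsymm] at htr ⊢
    linear_combination htr
  exact matCongruent_standard_of_mul_eq hq1 hqm1 (by linear_combination (-1 : ℂ) * htr) hMsymm
end

section
/- Let n ≥ 2 be a natural number, s a nonzero complex number, q = s², and M an invertible n×n complex matrix with inverse N. Then the following are equivalent: (1) for all indices i, j, k, l in {1,…,n}, s·[i=k]·[j=l] + s⁻¹·M_{ij}·N_{kl} = [i=l]·[j=k], where [P] is 1 if P holds and 0 otherwise; (2) q = 1, s = 1, n = 2, and there exists a nonzero x ∈ ℂ with M = [[0, x], [-x, 0]]. (Condition (1) says that the linear operator on ℂⁿ ⊗ ℂⁿ sending v_i ⊗ v_j to s·v_i ⊗ v_j + s⁻¹·M_{ij}·∑_{k,l} N_{kl}·v_k ⊗ v_l is the flip map v_i ⊗ v_j ↦ v_j ⊗ v_i.) -/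
open Matrix

/-- Let `n ≥ 2`, `s ≠ 0`, `q = s²`, and let `M` be an invertible `n×n` complex matrix with
inverse `N`. Then the operator `v_i ⊗ v_j ↦ s·v_i ⊗ v_j + s⁻¹·M_{ij}·∑_{k,l} N_{kl}·v_k ⊗ v_l`
is the flip map if and only if `q = 1`, `s = 1`, `n = 2` and `M = [[0,x],[-x,0]]` for some
nonzero `x`. -/
theorem braiding_is_flip_iff_standard
    (n : ℕ) (hn : 2 ≤ n) (s : ℂ) (hs : s ≠ 0) (q : ℂ) (hq : q = s ^ 2)
    (M N : Matrix (Fin n) (Fin n) ℂ) (hMN : M * N = 1) (hNM : N * M = 1) :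
    (∀ i j k l : Fin n,
        s * (if i = k then (1 : ℂ) else 0) * (if j = l then (1 : ℂ) else 0)
          + s⁻¹ * M i j * N k l
        = (if i = l then (1 : ℂ) else 0) * (if j = k then (1 : ℂ) else 0))
      ↔ (q = 1 ∧ s = 1 ∧ n = 2 ∧ ∃ x : ℂ, x ≠ 0 ∧
          ∀ i j : Fin n, M i j =
            if (i : ℕ) = 0 ∧ (j : ℕ) = 1 then x
            else if (i : ℕ) = 1 ∧ (j : ℕ) = 0 then -x
            else 0) := by
  constructor
  · intro H
    have hinv : s * s⁻¹ = 1 := mul_inv_cancel₀ hs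
    have key : ∀ i j k l : Fin n, M i j * N k l =
        s * ((if i = l then (1:ℂ) else 0) * (if j = k then (1:ℂ) else 0))
        - s ^ 2 * ((if i = k then (1:ℂ) else 0) * (if j = l then (1:ℂ) else 0)) := by
      intro i j k l
      linear_combination s * H i j k l - (M i j * N k l) * hinv
    have hdiag : ∀ a : Fin n, M a a = 0 := by
      intro a
      by_contra hMa
      have hnt : Nontrivial (Fin n) := Fin.nontrivial_iff_two_le.mpr hn
      obtain ⟨b, hb⟩ := exists_ne a
      have hNb : ∀ l, N b l = 0 := by
        intro l
        have h := key a a b l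
        simp [Ne.symm hb] at h
        exact h.resolve_left hMa
      have h1 := congrFun (congrFun hNM b) b
      rw [Matrix.mul_apply] at h1
      simp [hNb, Matrix.one_apply_eq] at h1
    have hs1 : s = 1 := by
      have h := key ⟨0, by omega⟩ ⟨0, by omega⟩ ⟨0, by omega⟩ ⟨0, by omega⟩
      rw [hdiag] at h
      simp at h
      have h2 : s * s = s * 1 := by linear_combination h
      exact mul_left_cancel₀ hs h2
    have hn2 : n = 2 := by
      by_contra hne
      have h3 : 3 ≤ n := by omega
      set a : Fin n := ⟨0, by omega⟩ with ha
      have h1 := congrFun (congrFun hMN a) a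
      rw [Matrix.mul_apply] at h1
      have hex : ∃ j ∈ Finset.univ, M a j * N j a ≠ 0 := by
        by_contra hc
        push_neg at hc
        rw [Finset.sum_eq_zero (fun j _ => hc j (Finset.mem_univ j))] at h1
        simp at h1
      obtain ⟨j, -, hj⟩ := hex
      have hMaj : M a j ≠ 0 := fun h => hj (by simp [h])
      have hja : j ≠ a := fun h => hMaj (by rw [h]; exact hdiag a)
      have hNrow : ∀ k l : Fin n, k ≠ a → k ≠ j → N k l = 0 := by
        intro k l hka hkj
        have h := key a j k l
        simp [Ne.symm hka, Ne.symm hkj] at h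
        exact h.resolve_left hMaj
      obtain ⟨c, hca, hcj⟩ : ∃ c : Fin n, c ≠ a ∧ c ≠ j := by
        by_contra hc
        push_neg at hc
        have hsub : (Finset.univ : Finset (Fin n)) ⊆ {a, j} := by
          intro c _
          rcases eq_or_ne c a with h | h
          · simp [h]
          · simp [hc c h]
        have hle := Finset.card_le_card hsub
        have h2 : ({a, j} : Finset (Fin n)).card ≤ 2 := by
          apply le_trans (Finset.card_insert_le a {j})
          simp
        rw [Finset.card_univ, Fintype.card_fin] at hle
        omega
      have h2 := congrFun (congrFun hNM c) c
      rw [Matrix.mul_apply] at h2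
      simp [hNrow _ _ hca hcj, Matrix.one_apply_eq] at h2
    subst hn2
    subst hs1
    have k1 : M 0 1 * N 1 0 = 1 := by simpa using key 0 1 1 0
    have hx : M 0 1 ≠ 0 := left_ne_zero_of_mul_eq_one k1
    have hN10 : N 1 0 ≠ 0 := right_ne_zero_of_mul_eq_one k1
    have k2 : M 1 0 * N 1 0 = -1 := by simpa using key 1 0 1 0
    have hM10 : M 1 0 = -(M 0 1) := by
      apply mul_right_cancel₀ hN10
      linear_combination k2 + k1
    refine ⟨by rw [hq]; norm_num, rfl, rfl, M 0 1, hx, ?_⟩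
    intro i j
    fin_cases i <;> fin_cases j <;> simp [hdiag, hM10]
  · rintro ⟨hq1, hs1, hn2, x, hx, hM⟩
    subst hn2
    subst hs1
    have hM00 : M 0 0 = 0 := by simpa using hM 0 0
    have hM01 : M 0 1 = x := by simpa using hM 0 1
    have hM10 : M 1 0 = -x := by simpa using hM 1 0
    have hM11 : M 1 1 = 0 := by simpa using hM 1 1
    have e00 := congrFun (congrFun hNM 0) 0
    have e01 := congrFun (congrFun hNM 0) 1
    have e10 := congrFun (congrFun hNM 1) 0
    have e11 := congrFun (congrFun hNM 1) 1
    rw [Matrix.mul_apply, Fin.sum_univ_two] at e00 e01 e10 e11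
    rw [hM00, hM10] at e00
    rw [hM01, hM11] at e01
    rw [hM00, hM10] at e10
    rw [hM01, hM11] at e11
    simp at e00 e01 e10 e11
    have hN00 : N 0 0 = 0 := by
      rcases e01 with h | h
      · exact h
      · exact absurd h hx
    have hN11 : N 1 1 = 0 := by
      rcases e10 with h | h
      · exact h
      · exact absurd h hx
    have hN01 : N 0 1 = -x⁻¹ := by
      field_simp
      linear_combination -e00
    have hN10 : N 1 0 = x⁻¹ := by
      field_simp
      linear_combination e11
    intro i j k l
    fin_cases i <;> fin_cases j <;> fin_cases k <;> fin_cases l <;>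
      simp [hM00, hM01, hM10, hM11, hN00, hN01, hN10, hN11, hx]
end

section
/- Let q be a complex number with q ≠ 0 and q⁴ ≠ 1. Then every invertible 3×3 complex matrix M with tr(Mᵀ · M⁻¹) = q² + 1 + q⁻² is congruent to the matrix [[1,0,0],[0,0,1],[0,q²,0]]. -/
open Matrix

/-!
Let `C = M⁻¹ Mᵀ`. Then `det C = 1` and `tr C⁻¹ = tr C = q² + 1 + q⁻²`, so `C` has the three
distinct eigenvalues `1, q⁻², q²`. The bilinear form `B(x, y) = xᵀ M y` satisfies
`B(x, C y) = B(y, x)`, so eigenvectors `x, y` of `C` with eigenvalues `α, β` satisfy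
`B(x, y) = α β B(x, y)`: they are `B`-orthogonal unless `α β = 1`. In an eigenbasis `e, v, u` the
Gram matrix of `B` is therefore `[[a, 0, 0], [0, 0, c], [0, q² c, 0]]`, nondegenerate because `M`
is, and rescaling `e` by `a^(-1/2)` and `v` by `c⁻¹` yields the normal form.
-/

theorem mul_mul_transpose_apply {n R : Type*} [Fintype n] [CommSemiring R]
    (W M : Matrix n n R) (i j : n) : (W * M * Wᵀ) i j = W i ⬝ᵥ M *ᵥ W j := by
  rw [mul_mul_apply, transpose_transpose]

section Field

variable {n K : Type*} [Fintype n] [DecidableEq n] [Field K] {M : Matrix n n K}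

theorem isUnit_of_rows_mulVec_eq_smul (C : Matrix n n K) {μ : n → K}
    (hμ : Function.Injective μ) {w : n → n → K} (hw : ∀ i, C *ᵥ w i = μ i • w i)
    (hw0 : ∀ i, w i ≠ 0) : IsUnit (of w) :=
  linearIndependent_rows_iff_isUnit.mp <|
    Module.End.eigenvectors_linearIndependent' C.mulVecLin μ hμ w
      fun i => ⟨Module.End.mem_eigenspace_iff.2 (hw i), hw0 i⟩

theorem det_inv_mul_transpose (hM : IsUnit M) : (M⁻¹ * Mᵀ).det = 1 := by
  rw [det_mul, det_nonsing_inv, det_transpose,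
    Ring.inverse_mul_cancel _ ((isUnit_iff_isUnit_det M).mp hM)]

theorem trace_inv_inv_mul_transpose (hM : IsUnit M) :
    (M⁻¹ * Mᵀ)⁻¹.trace = (M⁻¹ * Mᵀ).trace := by
  rw [Matrix.mul_inv_rev, nonsing_inv_nonsing_inv _ ((isUnit_iff_isUnit_det M).mp hM),
    trace_mul_comm, ← trace_transpose, transpose_mul, transpose_nonsing_inv, transpose_transpose]

theorem dotProduct_mulVec_inv_mul_transpose (hM : IsUnit M) (x y : n → K) :
    x ⬝ᵥ M *ᵥ ((M⁻¹ * Mᵀ) *ᵥ y) = y ⬝ᵥ M *ᵥ x := by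
  rw [mulVec_mulVec, ← Matrix.mul_assoc, mul_nonsing_inv _ ((isUnit_iff_isUnit_det M).mp hM),
    Matrix.one_mul, mulVec_transpose, dotProduct_comm, ← dotProduct_mulVec]

theorem mul_dotProduct_mulVec_of_mulVec_eq_smul (hM : IsUnit M) (x : n → K) {y : n → K}
    {β : K} (hy : (M⁻¹ * Mᵀ) *ᵥ y = β • y) : β * (x ⬝ᵥ M *ᵥ y) = y ⬝ᵥ M *ᵥ x := by
  rw [← dotProduct_mulVec_inv_mul_transpose hM x y, hy, mulVec_smul, dotProduct_smul, smul_eq_mul]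

theorem dotProduct_mulVec_eq_zero_of_mul_ne_one (hM : IsUnit M) {x y : n → K} {α β : K}
    (hx : (M⁻¹ * Mᵀ) *ᵥ x = α • x) (hy : (M⁻¹ * Mᵀ) *ᵥ y = β • y) (hαβ : α * β ≠ 1) :
    x ⬝ᵥ M *ᵥ y = 0 := by
  have hxy := mul_dotProduct_mulVec_of_mulVec_eq_smul hM x hy
  have hyx := mul_dotProduct_mulVec_of_mulVec_eq_smul hM y hx
  refine (mul_eq_zero.mp ?_).resolve_left (sub_ne_zero.mpr hαβ)
  linear_combination α * hxy + hyx

end Field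

theorem matCongruent_of_mul_mul_transpose_eq {n : ℕ} {M D W : Matrix (Fin n) (Fin n) ℂ}
    (hW : IsUnit W) (h : W * M * Wᵀ = D) : MatCongruent M D := by
  have hWd := (isUnit_iff_isUnit_det W).mp hW
  have hWtd : IsUnit Wᵀ.det := by rwa [det_transpose]
  refine ⟨W⁻¹ᵀ, (isUnit_transpose _).mpr (isUnit_nonsing_inv_iff.mpr hW), ?_⟩
  rw [← h, transpose_transpose, transpose_nonsing_inv, Matrix.mul_assoc, Matrix.mul_assoc,
    mul_nonsing_inv _ hWtd, Matrix.mul_one, ← Matrix.mul_assoc, nonsing_inv_mul _ hWd,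
    Matrix.one_mul]

theorem det_sub_smul_one_fin_three {R : Type*} [CommRing R] (A : Matrix (Fin 3) (Fin 3) R)
    (μ : R) : (A - μ • 1).det = A.det - μ * A.adjugate.trace + μ ^ 2 * A.trace - μ ^ 3 := by
  simp only [det_fin_three, adjugate_fin_three, trace_fin_three, of_apply, Matrix.sub_apply,
    Matrix.smul_apply, one_apply_eq, one_apply_ne, ne_eq, Fin.reduceEq, not_false_eq_true,
    smul_eq_mul, cons_val', cons_val_zero, cons_val_one, cons_val, cons_val_fin_one]
  ring

section FinThree

variable {K : Type*} [Field K] {M : Matrix (Fin 3) (Fin 3) K}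

theorem exists_mulVec_eq_smul_of_fin_three {C : Matrix (Fin 3) (Fin 3) K} {μ : K}
    (h : C.det - μ * C.adjugate.trace + μ ^ 2 * C.trace - μ ^ 3 = 0) :
    ∃ w ≠ 0, C *ᵥ w = μ • w := by
  obtain ⟨w, hw0, hw⟩ := exists_mulVec_eq_zero_iff.mpr ((det_sub_smul_one_fin_three C μ).trans h)
  exact ⟨w, hw0, by rwa [sub_mulVec, smul_mulVec, one_mulVec, sub_eq_zero] at hw⟩

theorem exists_mulVec_eq_smul_inv_mul_transpose_fin_three (hM : IsUnit M) {r : K} (hr : r ≠ 0)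
    (htr : (Mᵀ * M⁻¹).trace = 1 + r + r⁻¹) {μ : K} (hμ : μ = 1 ∨ μ = r ∨ μ = r⁻¹) :
    ∃ w ≠ 0, (M⁻¹ * Mᵀ) *ᵥ w = μ • w := by
  have hdet := det_inv_mul_transpose hM
  have hadj : (M⁻¹ * Mᵀ).adjugate = (M⁻¹ * Mᵀ)⁻¹ := by
    rw [inv_def (M⁻¹ * Mᵀ), hdet, Ring.inverse_one, one_smul]
  apply exists_mulVec_eq_smul_of_fin_three
  rw [hdet, hadj, trace_inv_inv_mul_transpose hM, trace_mul_comm, htr]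
  rcases hμ with rfl | rfl | rfl <;> field_simp <;> ring

theorem mul_mul_transpose_eq_of_eigenvectors (hM : IsUnit M) {r : K} (hr2 : r ^ 2 ≠ 1)
    {e v u : Fin 3 → K} (he : (M⁻¹ * Mᵀ) *ᵥ e = (1 : K) • e) (hv : (M⁻¹ * Mᵀ) *ᵥ v = r⁻¹ • v)
    (hu : (M⁻¹ * Mᵀ) *ᵥ u = r • u) :
    of ![e, v, u] * M * (of ![e, v, u])ᵀ =
      !![e ⬝ᵥ M *ᵥ e, 0, 0; 0, 0, v ⬝ᵥ M *ᵥ u; 0, r * (v ⬝ᵥ M *ᵥ u), 0] := by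
  have hr1 : r ≠ 1 := by rintro rfl; exact hr2 (one_pow 2)
  have hrr : r * r ≠ 1 := by rwa [← sq]
  have hrr' : r⁻¹ * r⁻¹ ≠ 1 := by rwa [← mul_inv, inv_ne_one]
  have hev := dotProduct_mulVec_eq_zero_of_mul_ne_one hM he hv (by simpa)
  have heu := dotProduct_mulVec_eq_zero_of_mul_ne_one hM he hu (by simpa)
  have hve := dotProduct_mulVec_eq_zero_of_mul_ne_one hM hv he (by simpa)
  have hue := dotProduct_mulVec_eq_zero_of_mul_ne_one hM hu he (by simpa)
  have hvv := dotProduct_mulVec_eq_zero_of_mul_ne_one hM hv hv hrr'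
  have huu := dotProduct_mulVec_eq_zero_of_mul_ne_one hM hu hu hrr
  have huv := mul_dotProduct_mulVec_of_mulVec_eq_smul hM v hu
  ext i j
  rw [mul_mul_transpose_apply]
  fin_cases i <;> fin_cases j
  exacts [rfl, hev, heu, hve, hvv, rfl, hue, huv.symm, huu]

theorem exists_isUnit_mul_mul_transpose_eq_standard [IsAlgClosed K] {a c : K} (ha : a ≠ 0)
    (hc : c ≠ 0) (r : K) :
    ∃ D : Matrix (Fin 3) (Fin 3) K, IsUnit D ∧
      D * !![a, 0, 0; 0, 0, c; 0, r * c, 0] * Dᵀ = !![1, 0, 0; 0, 0, 1; 0, r, 0] := by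
  obtain ⟨z, hz⟩ := IsAlgClosed.exists_pow_nat_eq a two_pos
  have hz0 : z ≠ 0 := by rintro rfl; exact ha (by rw [← hz, zero_pow two_ne_zero])
  refine ⟨diagonal ![z⁻¹, c⁻¹, 1], isUnit_diagonal.mpr (Pi.isUnit_iff.mpr fun i => ?_), ?_⟩
  · fin_cases i <;> simp [hz0, hc]
  · rw [diagonal_transpose]
    ext i j
    fin_cases i <;> fin_cases j <;>
      simp only [Fin.zero_eta, Fin.isValue, Fin.mk_one, Fin.reduceFinMk, mul_diagonal, diagonal_mul,
        of_apply, cons_val', cons_val_zero, cons_val_one, cons_val, cons_val_fin_one, mul_zero,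
        zero_mul, mul_one, one_mul]
    · rw [← hz]; field_simp
    · exact inv_mul_cancel₀ hc
    · exact mul_inv_cancel_right₀ hc r

theorem exists_isUnit_mul_mul_transpose_eq_of_trace [IsAlgClosed K] (hM : IsUnit M) {r : K}
    (hr : r ≠ 0) (hr2 : r ^ 2 ≠ 1) (htr : (Mᵀ * M⁻¹).trace = 1 + r + r⁻¹) :
    ∃ W, IsUnit W ∧ W * M * Wᵀ = !![1, 0, 0; 0, 0, 1; 0, r, 0] := by
  obtain ⟨e, he0, he⟩ := exists_mulVec_eq_smul_inv_mul_transpose_fin_three hM hr htr (.inl rfl)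
  obtain ⟨v, hv0, hv⟩ :=
    exists_mulVec_eq_smul_inv_mul_transpose_fin_three hM hr htr (.inr (.inr rfl))
  obtain ⟨u, hu0, hu⟩ :=
    exists_mulVec_eq_smul_inv_mul_transpose_fin_three hM hr htr (.inr (.inl rfl))
  have hr1 : r ≠ 1 := by rintro rfl; exact hr2 (one_pow 2)
  have hrinv : r ≠ r⁻¹ := fun h => hr2 (by rw [sq, ← mul_inv_cancel₀ hr, ← h])
  have hμ : Function.Injective ![1, r⁻¹, r] := by
    intro i j h
    fin_cases i <;> fin_cases j <;> simp [hr1, hr1.symm, hrinv, hrinv.symm] at h ⊢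
  have hW₀ : IsUnit (of ![e, v, u]) := by
    refine isUnit_of_rows_mulVec_eq_smul (M⁻¹ * Mᵀ) hμ (fun i => ?_) (fun i => ?_) <;> fin_cases i
    exacts [he, hv, hu, he0, hv0, hu0]
  have hG := mul_mul_transpose_eq_of_eigenvectors hM hr2 he hv hu
  have hdet := ((isUnit_iff_isUnit_det _).mp
    ((hW₀.mul hM).mul ((isUnit_transpose _).mpr hW₀))).ne_zero
  rw [hG, det_fin_three] at hdet
  simp only [Fin.isValue, of_apply, cons_val', cons_val_zero, cons_val_fin_one, cons_val_one,
    mul_zero, cons_val, zero_sub, sub_zero, zero_mul, add_zero, ne_eq, neg_eq_zero, mul_eq_zero,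
    not_or] at hdet
  obtain ⟨D, hD, hDG⟩ := exists_isUnit_mul_mul_transpose_eq_standard hdet.1.1 hdet.1.2 r
  refine ⟨D * of ![e, v, u], hD.mul hW₀, ?_⟩
  rw [← hDG, ← hG, transpose_mul]
  simp only [Matrix.mul_assoc]

end FinThree

/-- For `q ≠ 0` with `q⁴ ≠ 1`, every invertible `3×3` complex matrix `M` with
`tr(Mᵀ * M⁻¹) = q² + 1 + q⁻²` is congruent to `[[1,0,0],[0,0,1],[0,q²,0]]`. -/
theorem so3_solution_congruent_standard (q : ℂ) (hq0 : q ≠ 0) (hq4 : q ^ 4 ≠ 1)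
    (M : Matrix (Fin 3) (Fin 3) ℂ) (hM : IsUnit M)
    (htr : (Mᵀ * M⁻¹).trace = q ^ 2 + 1 + (q⁻¹) ^ 2) :
    MatCongruent M !![1, 0, 0; 0, 0, 1; 0, q ^ 2, 0] := by
  obtain ⟨W, hW, hWM⟩ := exists_isUnit_mul_mul_transpose_eq_of_trace hM (pow_ne_zero 2 hq0)
    (by rwa [← pow_mul]) (by rw [htr, inv_pow]; ring)
  exact matCongruent_of_mul_mul_transpose_eq hW hWM
end

section
/- For every nonzero complex number λ, the 2×2 matrix [[0,1],[λ,0]] is congruent to [[0,1],[λ⁻¹,0]]. -/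
open Matrix

theorem MatrixCongruent.of_transpose_mul_eq_one {n : ℕ} {A B : Matrix (Fin n) (Fin n) ℂ}
    (h : Aᵀ * B = 1) : MatrixCongruent A B :=
  ⟨A, (isUnit_transpose A).1 ((isUnit_iff_isUnit_det _).2 (isUnit_det_of_right_inverse h)),
    by rw [h, one_mul]⟩

/-- For every nonzero `lam : ℂ`, the matrix `[[0,1],[lam,0]]` is congruent to
`[[0,1],[lam⁻¹,0]]`. -/
theorem H2_congruent_inv (lam : ℂ) (hlam : lam ≠ 0) :
    MatrixCongruent !![0, 1; lam, 0] !![0, 1; lam⁻¹, 0] := by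
  apply MatrixCongruent.of_transpose_mul_eq_one
  rw [one_fin_two, eta_fin_two (_ * _)]
  simp [mul_apply, hlam]
end

section
/- The 2×2 complex matrix G = [[0,-1],[1,1]] is invertible, satisfies tr(Gᵀ · G⁻¹) = -2, and is not congruent to the matrix S = [[0,1],[-1,0]] (which also is invertible with tr(Sᵀ · S⁻¹) = -2). Hence at q = 1 there are at least two congruence classes of invertible 2×2 matrices M with tr(Mᵀ · M⁻¹) = -(q + q⁻¹). -/
open Matrix

/-! The trace is computed from the explicit 2 × 2 formula `(2ad - b² - c²) / det`. Congruence
preserves skew-symmetry, and `S` is skew-symmetric while `G` has a nonzero diagonal entry. -/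

-- Also true when `det = 0`: then `M⁻¹ = 0` and the right-hand side is a division by zero.
theorem Matrix.trace_transpose_mul_inv_fin_two_s16 {K : Type*} [Field K] (a b c d : K) :
    ((!![a, b; c, d])ᵀ * (!![a, b; c, d])⁻¹).trace =
      (2 * a * d - b ^ 2 - c ^ 2) / (a * d - b * c) := by
  rw [inv_def, det_fin_two_of, adjugate_fin_two_of, Ring.inverse_eq_inv', mul_smul_comm,
    trace_smul, smul_eq_mul]
  simp only [trace_fin_two, mul_apply, transpose_apply, of_apply, cons_val', cons_val_zero,
    cons_val_fin_one, Fin.sum_univ_two, cons_val_one]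
  ring

theorem Matrix.transpose_mul_mul_self_eq_neg {R n : Type*} [CommRing R] [Fintype n]
    {B : Matrix n n R} (hB : Bᵀ = -B) (P : Matrix n n R) : (Pᵀ * B * P)ᵀ = -(Pᵀ * B * P) := by
  rw [transpose_mul, transpose_mul, transpose_transpose, hB, ← Matrix.mul_assoc, Matrix.mul_neg,
    Matrix.neg_mul]

theorem MatCongruent.transpose_eq_neg {n : ℕ} {A B : Matrix (Fin n) (Fin n) ℂ}
    (h : MatCongruent A B) (hB : Bᵀ = -B) : Aᵀ = -A := by
  obtain ⟨P, -, rfl⟩ := h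
  exact transpose_mul_mul_self_eq_neg hB P

/-- The matrices `G = [[0,-1],[1,1]]` and `S = [[0,1],[-1,0]]` are both invertible with
`tr(Mᵀ * M⁻¹) = -2`, yet they are not congruent; so at `q = 1` there are at least two
congruence classes of solutions. -/
theorem two_noncongruent_solutions_at_q_one :
    IsUnit (!![0, -1; 1, 1] : Matrix (Fin 2) (Fin 2) ℂ) ∧
    ((!![0, -1; 1, 1] : Matrix (Fin 2) (Fin 2) ℂ)ᵀ * (!![0, -1; 1, 1])⁻¹).trace = -2 ∧
    IsUnit (!![0, 1; -1, 0] : Matrix (Fin 2) (Fin 2) ℂ) ∧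
    ((!![0, 1; -1, 0] : Matrix (Fin 2) (Fin 2) ℂ)ᵀ * (!![0, 1; -1, 0])⁻¹).trace = -2 ∧
    ¬ MatCongruent !![0, -1; 1, 1] !![0, 1; -1, 0] := by
  refine ⟨?_, ?_, ?_, ?_, fun h => ?_⟩
  · simp [isUnit_iff_isUnit_det, det_fin_two_of]
  · rw [trace_transpose_mul_inv_fin_two_s16]; norm_num
  · simp [isUnit_iff_isUnit_det, det_fin_two_of]
  · rw [trace_transpose_mul_inv_fin_two_s16]; norm_num
  · have hS : (!![0, 1; -1, 0] : Matrix (Fin 2) (Fin 2) ℂ)ᵀ = -!![0, 1; -1, 0] := by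
      ext i j; fin_cases i <;> fin_cases j <;> simp
    have hG := congrFun₂ (h.transpose_eq_neg hS) 1 1
    norm_num at hG
end
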